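/- For every z ∈ ℂ ∖ (−∞,0] and every k ∈ ℤ, the Wronskian of the solutions s(z) and u(z) satisfies [s(z), u(z)]_k = a_k (s_k(z) u_{k+1}(z) − s_{k+1}(z) u_k(z)) = e^{z} z^{−2iρ} Γ(1+2iρ), where z^{−2iρ} is the principal power; in particular this Wronskian is independent of k and nonzero. -/

import Mathlib

open Complex MeasureTheory

noncomputable section

/-- Pochhammer symbol `(a)_n`. -/
def poch (a : ℂ) (n : ℕ) : ℂ := ∏ i ∈ Finset.range n, (a + i)

/-- Confluent hypergeometric function `₁F₁(a;b;z)`. -/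
def hyp1F1 (a b z : ℂ) : ℂ := ∑' n : ℕ, poch a n * z ^ n / (poch b n * (n.factorial : ℂ))

/-- Second solution `U(a;b;z)` of the confluent hypergeometric equation (principal branch). -/
def USol (a b z : ℂ) : ℂ :=
  Complex.Gamma (1 - b) / Complex.Gamma (a - b + 1) * hyp1F1 a b z
  + Complex.Gamma (b - 1) / Complex.Gamma a * z ^ (1 - b) * hyp1F1 (a - b + 1) (2 - b) z

/-- `a_k = |k + ε + 1/2 + iρ|`. -/
def coefA (ρ ε : ℝ) (k : ℤ) : ℝ := Norm.norm ((k : ℂ) + (ε : ℂ) + 1/2 + I * (ρ : ℂ))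

/-- `b_k = 2(k + ε)`. -/
def coefB (ρ ε : ℝ) (k : ℤ) : ℝ := 2 * ((k : ℝ) + ε)

/-- The solution `s_k(z)`. -/
def sSol (ρ ε : ℝ) (k : ℤ) (z : ℂ) : ℂ :=
  (-1 : ℂ) ^ k * ((Norm.norm (Complex.Gamma ((k : ℂ) + (ε : ℂ) + 1/2 + I * ρ)) : ℂ) /
      Complex.Gamma ((k : ℂ) + (ε : ℂ) + 1/2 - I * ρ)) *
    hyp1F1 ((k : ℂ) + (ε : ℂ) + 1/2 + I * ρ) (1 + 2 * I * ρ) z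

/-- The solution `t_k(z)`. -/
def tSol (ρ ε : ℝ) (k : ℤ) (z : ℂ) : ℂ :=
  ((Norm.norm (Complex.Gamma (1/2 - (k : ℂ) - (ε : ℂ) - I * ρ)) : ℂ) /
      Complex.Gamma (1/2 - (k : ℂ) - (ε : ℂ) + I * ρ)) *
    hyp1F1 (1/2 - (k : ℂ) - (ε : ℂ) - I * ρ) (1 - 2 * I * ρ) (-z)

/-- The solution `u_k(z)`, for `z ∉ (-∞,0]`. -/
def uSol (ρ ε : ℝ) (k : ℤ) (z : ℂ) : ℂ :=
  (-1 : ℂ) ^ k * (Norm.norm (Complex.Gamma ((k : ℂ) + (ε : ℂ) + 1/2 + I * ρ)) : ℂ) *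
    USol ((k : ℂ) + (ε : ℂ) + 1/2 + I * ρ) (1 + 2 * I * ρ) z

/-- The solution `v_k(z)`, for `z ∉ [0,∞)`. -/
def vSol (ρ ε : ℝ) (k : ℤ) (z : ℂ) : ℂ :=
  (Norm.norm (Complex.Gamma (1/2 - (k : ℂ) - (ε : ℂ) - I * ρ)) : ℂ) *
    USol (1/2 - (k : ℂ) - (ε : ℂ) - I * ρ) (1 - 2 * I * ρ) (-z)

/-! Write `A = k + ε + 1/2 + iρ` and `c = 2iρ`, so that `Ā = A - c`. Up to the sign `(-1)^k`,
`u_k = Γ(-c) s_k + Γ(c) z^{-c} (|Γ(A)|/Γ(A)) ₁F₁(A - c; 1 - c; z)`, so the `s`-part of `u` drops out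
of the Wronskian, and `|A|² = A Ā`, `|Γ(A)|² = Γ(A) Γ(Ā)` reduce what remains to the identity
`a ₁F₁(a+1; 1+c; z) ₁F₁(a-c; 1-c; z) - (a-c) ₁F₁(a; 1+c; z) ₁F₁(a-c+1; 1-c; z) = c e^z`.
Its Cauchy-product coefficients are settled by induction on the degree, using only the two-term
recurrences of the Taylor coefficients of `₁F₁`. -/

open ComplexConjugate Finset

lemma poch_succ (a : ℂ) (n : ℕ) : poch a (n + 1) = poch a n * (a + n) :=
  Finset.prod_range_succ _ _

lemma mul_poch_add_one (a : ℂ) (n : ℕ) : a * poch (a + 1) n = poch a (n + 1) := by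
  simp only [poch, Finset.prod_range_succ', Nat.cast_zero, add_zero, Nat.cast_succ, add_assoc,
    add_comm (1 : ℂ), mul_comm a]

def hyp1F1Coeff (a b : ℂ) (n : ℕ) : ℂ := poch a n / (poch b n * n.factorial)

lemma hyp1F1_eq_tsum (a b z : ℂ) : hyp1F1 a b z = ∑' n, hyp1F1Coeff a b n * z ^ n := by
  simp only [hyp1F1, hyp1F1Coeff, mul_div_right_comm]

lemma hyp1F1Coeff_zero (a b : ℂ) : hyp1F1Coeff a b 0 = 1 := by
  simp [hyp1F1Coeff, poch]

lemma hyp1F1Coeff_succ (a b : ℂ) (n : ℕ) :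
    hyp1F1Coeff a b (n + 1) = hyp1F1Coeff a b n * ((a + n) / ((b + n) * (n + 1))) := by
  rw [hyp1F1Coeff, hyp1F1Coeff, div_mul_div_comm, poch_succ, poch_succ, Nat.factorial_succ]
  push_cast
  ring

lemma succ_mul_hyp1F1Coeff_succ {a b : ℂ} {n : ℕ} (hb : b + n ≠ 0) :
    (n + 1) * (b + n) * hyp1F1Coeff a b (n + 1) = (a + n) * hyp1F1Coeff a b n := by
  rw [hyp1F1Coeff_succ]
  field_simp

lemma mul_hyp1F1Coeff_add_one (a b : ℂ) (n : ℕ) :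
    a * hyp1F1Coeff (a + 1) b n = (a + n) * hyp1F1Coeff a b n := by
  rw [hyp1F1Coeff, hyp1F1Coeff, ← mul_div_assoc, mul_poch_add_one, poch_succ]
  ring

lemma norm_hyp1F1Coeff_ratio_mul_le (a b z : ℂ) {n : ℕ} (hn : 2 * ‖a‖ + 2 * ‖b‖ + 8 * ‖z‖ + 1 ≤ n) :
    ‖(a + n) / ((b + n) * (n + 1)) * z‖ ≤ 1 / 2 := by
  have hn1 : ‖(n : ℂ) + 1‖ = n + 1 := by exact_mod_cast Complex.norm_natCast (n + 1)
  have ha : ‖a + n‖ ≤ 2 * n := by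
    have := norm_add_le a n
    rw [Complex.norm_natCast] at this
    linarith [norm_nonneg b, norm_nonneg z]
  have hb : (n : ℝ) / 2 ≤ ‖b + n‖ := by
    have := norm_sub_norm_le (n : ℂ) (-b)
    rw [Complex.norm_natCast, norm_neg, sub_neg_eq_add, add_comm] at this
    linarith [norm_nonneg a, norm_nonneg z]
  rw [norm_mul, norm_div, norm_mul, hn1, div_mul_eq_mul_div]
  refine div_le_of_le_mul₀ (by positivity) (by norm_num) ?_
  calc ‖a + n‖ * ‖z‖ ≤ 2 * n * ‖z‖ := by gcongr
    _ ≤ 1 / 2 * (n / 2 * (n + 1)) := by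
      have : 8 * ‖z‖ ≤ n + 1 := by linarith [norm_nonneg a, norm_nonneg b]
      nlinarith [mul_le_mul_of_nonneg_left this (Nat.cast_nonneg (α := ℝ) n)]
    _ ≤ 1 / 2 * (‖b + n‖ * (n + 1)) := by gcongr

lemma summable_norm_hyp1F1Coeff_mul_pow (a b z : ℂ) :
    Summable fun n ↦ ‖hyp1F1Coeff a b n * z ^ n‖ := by
  refine summable_of_ratio_norm_eventually_le (r := 1 / 2) (by norm_num) ?_
  filter_upwards [Filter.eventually_ge_atTop ⌈2 * ‖a‖ + 2 * ‖b‖ + 8 * ‖z‖ + 1⌉₊] with n hn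
  have hratio := norm_hyp1F1Coeff_ratio_mul_le a b z (Nat.ceil_le.1 hn)
  rw [norm_norm, norm_norm, hyp1F1Coeff_succ, pow_succ, mul_mul_mul_comm, norm_mul, mul_comm]
  exact mul_le_mul_of_nonneg_right hratio (norm_nonneg _)

lemma hasSum_hyp1F1_mul_hyp1F1 (a b a' b' z : ℂ) :
    HasSum (fun n ↦ (∑ p ∈ antidiagonal n, hyp1F1Coeff a b p.1 * hyp1F1Coeff a' b' p.2) * z ^ n)
      (hyp1F1 a b z * hyp1F1 a' b' z) := by
  have hf := summable_norm_hyp1F1Coeff_mul_pow a b z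
  have hg := summable_norm_hyp1F1Coeff_mul_pow a' b' z
  rw [hyp1F1_eq_tsum, hyp1F1_eq_tsum, tsum_mul_tsum_eq_tsum_sum_antidiagonal_of_summable_norm hf hg]
  refine (summable_norm_sum_mul_antidiagonal_of_summable_norm hf hg).of_norm.hasSum.congr_fun
    fun n ↦ ?_
  rw [sum_mul]
  refine sum_congr rfl fun p hp ↦ ?_
  rw [← mem_antidiagonal.1 hp, pow_add]
  ring

/-- In the inductive step, `(i + j)(c + i - j) = i (c + i) - j (j - c)` splits `n + 1` times the sum
over the antidiagonal `n + 1` into two sums that the recurrences for `p` and `q` lower to the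
antidiagonal `n`. -/
lemma factorial_mul_sum_antidiagonal_eq {a c : ℂ} {p q : ℕ → ℂ}
    (hp : ∀ i : ℕ, (i + 1) * (1 + c + i) * p (i + 1) = (a + i) * p i)
    (hq : ∀ j : ℕ, (j + 1) * (1 - c + j) * q (j + 1) = (a - c + j) * q j) (n : ℕ) :
    n.factorial * ∑ x ∈ antidiagonal n, (c + x.1 - x.2) * p x.1 * q x.2 = c * p 0 * q 0 := by
  induction n with
  | zero => simp
  | succ n ih =>
    rw [← ih, Nat.factorial_succ, Nat.cast_mul, mul_comm ((n + 1 : ℕ) : ℂ), mul_assoc]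
    congr 1
    calc ((n + 1 : ℕ) : ℂ) * ∑ x ∈ antidiagonal (n + 1), (c + x.1 - x.2) * p x.1 * q x.2
        = ∑ x ∈ antidiagonal (n + 1), x.1 * (c + x.1) * p x.1 * q x.2
          - ∑ x ∈ antidiagonal (n + 1), x.2 * (x.2 - c) * p x.1 * q x.2 := by
          rw [mul_sum, ← sum_sub_distrib]
          refine sum_congr rfl fun x hx ↦ ?_
          rw [← mem_antidiagonal.1 hx]
          push_cast
          ring
      _ = ∑ x ∈ antidiagonal n, (a + x.1) * p x.1 * q x.2
          - ∑ x ∈ antidiagonal n, (a - c + x.2) * p x.1 * q x.2 := by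
          rw [Nat.sum_antidiagonal_succ, Nat.sum_antidiagonal_succ']
          congr 1 <;> simp only [Nat.cast_zero, zero_mul, zero_add, zero_sub] <;>
            refine sum_congr rfl fun x _ ↦ ?_
          · push_cast; linear_combination q x.2 * hp x.1
          · push_cast; linear_combination p x.1 * hq x.2
      _ = ∑ x ∈ antidiagonal n, (c + x.1 - x.2) * p x.1 * q x.2 := by
          rw [← sum_sub_distrib]
          refine sum_congr rfl fun x _ ↦ ?_
          ring

theorem hyp1F1_contiguous_wronskian (a c z : ℂ) (hc₁ : ∀ n : ℕ, 1 + c + n ≠ 0)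
    (hc₂ : ∀ n : ℕ, 1 - c + n ≠ 0) :
    a * (hyp1F1 (a + 1) (1 + c) z * hyp1F1 (a - c) (1 - c) z)
      - (a - c) * (hyp1F1 a (1 + c) z * hyp1F1 (a - c + 1) (1 - c) z) = c * exp z := by
  set p := hyp1F1Coeff a (1 + c)
  set q := hyp1F1Coeff (a - c) (1 - c)
  have hcoeff : ∀ n : ℕ, ∑ x ∈ antidiagonal n, (c + x.1 - x.2) * p x.1 * q x.2
      = c / n.factorial := fun n ↦ by
    rw [eq_div_iff (Nat.cast_ne_zero.2 n.factorial_ne_zero), mul_comm,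
      factorial_mul_sum_antidiagonal_eq (fun i ↦ succ_mul_hyp1F1Coeff_succ (hc₁ i))
        (fun j ↦ succ_mul_hyp1F1Coeff_succ (hc₂ j)), hyp1F1Coeff_zero, hyp1F1Coeff_zero]
    ring
  have hexp : HasSum (fun n ↦ c * (z ^ n / n.factorial)) (c * exp z) := by
    rw [exp_eq_exp_ℂ]
    exact (NormedSpace.expSeries_div_hasSum_exp z).mul_left c
  refine (((hasSum_hyp1F1_mul_hyp1F1 _ _ _ _ z).mul_left a).sub
    ((hasSum_hyp1F1_mul_hyp1F1 _ _ _ _ z).mul_left (a - c))).unique (hexp.congr_fun fun n ↦ ?_)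
  rw [← mul_div_assoc, ← div_mul_eq_mul_div, ← hcoeff, ← mul_assoc, ← mul_assoc, ← sub_mul,
    mul_sum, mul_sum, ← sum_sub_distrib]
  refine congrArg (· * z ^ n) (sum_congr rfl fun x _ ↦ ?_)
  linear_combination q x.2 * mul_hyp1F1Coeff_add_one a (1 + c) x.1
    - p x.1 * mul_hyp1F1Coeff_add_one (a - c) (1 - c) x.2

lemma USol_one_add (a c z : ℂ) :
    USol a (1 + c) z = Gamma (-c) / Gamma (a - c) * hyp1F1 a (1 + c) z
      + Gamma c / Gamma a * z ^ (-c) * hyp1F1 (a - c) (1 - c) z := by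
  rw [USol, show 1 - (1 + c) = -c by ring, show a - (1 + c) + 1 = a - c by ring,
    show 1 + c - 1 = c by ring, show 2 - (1 + c) = 1 - c by ring]

def sUnsigned (A c z : ℂ) : ℂ := (‖Gamma A‖ : ℂ) / Gamma (A - c) * hyp1F1 A (1 + c) z

def uUnsigned (A c z : ℂ) : ℂ := (‖Gamma A‖ : ℂ) * USol A (1 + c) z

lemma uUnsigned_eq (A c z : ℂ) :
    uUnsigned A c z = Gamma (-c) * sUnsigned A c z
      + Gamma c * z ^ (-c) * ((‖Gamma A‖ : ℂ) / Gamma A * hyp1F1 (A - c) (1 - c) z) := by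
  rw [uUnsigned, sUnsigned, USol_one_add]
  ring

lemma norm_mul_Gamma_ratios_eq_self {A : ℂ} (hA : ∀ m : ℕ, A ≠ -m) :
    (‖A‖ : ℂ) * ((‖Gamma (A + 1)‖ : ℂ) / Gamma (conj A + 1)) * ((‖Gamma A‖ : ℂ) / Gamma A) = A := by
  have hA0 : A ≠ 0 := by simpa using hA 0
  have hΓ : Gamma A ≠ 0 := Gamma_ne_zero hA
  rw [Gamma_add_one A hA0, Gamma_add_one _ ((map_ne_zero _).2 hA0), Gamma_conj, norm_mul,
    ofReal_mul]
  field_simp [(map_ne_zero (starRingEnd ℂ)).2 hΓ, (map_ne_zero (starRingEnd ℂ)).2 hA0]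
  linear_combination -(‖Gamma A‖ : ℂ) ^ 2 * mul_conj' A - A * conj A * mul_conj' (Gamma A)

lemma norm_mul_Gamma_ratios_eq_conj {A : ℂ} (hA : ∀ m : ℕ, A ≠ -m) :
    (‖A‖ : ℂ) * ((‖Gamma A‖ : ℂ) / Gamma (conj A)) * ((‖Gamma (A + 1)‖ : ℂ) / Gamma (A + 1))
      = conj A := by
  have hA0 : A ≠ 0 := by simpa using hA 0
  have hΓ : Gamma A ≠ 0 := Gamma_ne_zero hA
  rw [Gamma_add_one A hA0, Gamma_conj, norm_mul, ofReal_mul]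
  field_simp [(map_ne_zero (starRingEnd ℂ)).2 hΓ, (map_ne_zero (starRingEnd ℂ)).2 hA0]
  linear_combination -(‖Gamma A‖ : ℂ) ^ 2 * mul_conj' A - A * conj A * mul_conj' (Gamma A)

theorem wronskian_sUnsigned_uUnsigned {A c : ℂ} (hc : conj A = A - c) (hA : A.im ≠ 0) (z : ℂ) :
    (‖A‖ : ℂ) * (sUnsigned (A + 1) c z * uUnsigned A c z - sUnsigned A c z * uUnsigned (A + 1) c z)
      = exp z * z ^ (-c) * Gamma (1 + c) := by
  have hcim : c.im = 2 * A.im := by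
    have := congrArg im hc
    simp only [conj_im, sub_im] at this
    linarith
  have hc₀ : c ≠ 0 := fun h ↦ hA (by simpa [h] using hcim)
  have hc₁ (n : ℕ) : 1 + c + n ≠ 0 := fun h ↦ hA (by simpa [hcim] using congrArg im h)
  have hc₂ (n : ℕ) : 1 - c + n ≠ 0 := fun h ↦ hA (by simpa [hcim] using congrArg im h)
  have hA' (m : ℕ) : A ≠ -m := fun h ↦ hA (by simp [h])
  have e₁ := norm_mul_Gamma_ratios_eq_self hA'
  have e₂ := norm_mul_Gamma_ratios_eq_conj hA'
  rw [hc] at e₁ e₂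
  calc (‖A‖ : ℂ) * (sUnsigned (A + 1) c z * uUnsigned A c z
        - sUnsigned A c z * uUnsigned (A + 1) c z)
      = Gamma c * z ^ (-c) * (A * (hyp1F1 (A + 1) (1 + c) z * hyp1F1 (A - c) (1 - c) z)
          - (A - c) * (hyp1F1 A (1 + c) z * hyp1F1 (A - c + 1) (1 - c) z)) := by
        rw [uUnsigned_eq, uUnsigned_eq]
        simp only [sUnsigned, add_sub_right_comm A 1 c]
        linear_combination Gamma c * z ^ (-c) *
          (hyp1F1 (A + 1) (1 + c) z * hyp1F1 (A - c) (1 - c) z * e₁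
            - hyp1F1 A (1 + c) z * hyp1F1 (A - c + 1) (1 - c) z * e₂)
    _ = Gamma c * z ^ (-c) * (c * exp z) := by rw [hyp1F1_contiguous_wronskian A c z hc₁ hc₂]
    _ = exp z * z ^ (-c) * Gamma (1 + c) := by rw [add_comm, Gamma_add_one c hc₀]; ring

lemma sSol_eq_zpow_mul_sUnsigned (ρ ε : ℝ) (k : ℤ) (z : ℂ) :
    sSol ρ ε k z = (-1) ^ k * sUnsigned (k + ε + 1 / 2 + I * ρ) (2 * I * ρ) z := by
  rw [sSol, sUnsigned, show (k : ℂ) + ε + 1 / 2 + I * ρ - 2 * I * ρ = k + ε + 1 / 2 - I * ρ by ring]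
  ring

lemma uSol_eq_zpow_mul_uUnsigned (ρ ε : ℝ) (k : ℤ) (z : ℂ) :
    uSol ρ ε k z = (-1) ^ k * uUnsigned (k + ε + 1 / 2 + I * ρ) (2 * I * ρ) z := by
  rw [uSol, uUnsigned, mul_assoc]

theorem laguerre_wronskian_s_u_general (ρ ε : ℝ) (hρ : 0 < ρ)
    (z : ℂ) (hz : ¬(z.im = 0 ∧ z.re ≤ 0)) :
    (∀ k : ℤ,
      (coefA ρ ε k : ℂ) * (sSol ρ ε k z * uSol ρ ε (k + 1) z - sSol ρ ε (k + 1) z * uSol ρ ε k z)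
        = Complex.exp z * z ^ (-2 * I * (ρ : ℂ)) * Complex.Gamma (1 + 2 * I * ρ)) ∧
    Complex.exp z * z ^ (-2 * I * (ρ : ℂ)) * Complex.Gamma (1 + 2 * I * ρ) ≠ 0 := by
  refine ⟨fun k ↦ ?_, ?_⟩
  · rw [sSol_eq_zpow_mul_sUnsigned, sSol_eq_zpow_mul_sUnsigned, uSol_eq_zpow_mul_uUnsigned,
      uSol_eq_zpow_mul_uUnsigned, zpow_add_one₀ (by norm_num), neg_mul, neg_mul]
    set A : ℂ := k + ε + 1 / 2 + I * ρ
    rw [show ((k + 1 : ℤ) : ℂ) + ε + 1 / 2 + I * ρ = A + 1 by push_cast; ring,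
      show coefA ρ ε k = ‖A‖ from rfl]
    have hconj : conj A = A - 2 * I * ρ := by apply Complex.ext <;> simp [A]; ring
    have hsign : (-1 : ℂ) ^ k * (-1) ^ k = 1 := by rw [← mul_zpow]; norm_num
    linear_combination wronskian_sUnsigned_uUnsigned hconj (by simpa [A] using hρ.ne') z
      + (‖A‖ : ℂ) * (sUnsigned (A + 1) (2 * I * ρ) z * uUnsigned A (2 * I * ρ) z
        - sUnsigned A (2 * I * ρ) z * uUnsigned (A + 1) (2 * I * ρ) z) * hsign
  · have hz₀ : z ≠ 0 := fun h ↦ hz (by simp [h])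
    refine mul_ne_zero (mul_ne_zero (exp_ne_zero z) (cpow_ne_zero_iff.2 (Or.inl hz₀)))
      (Gamma_ne_zero fun m h ↦ hρ.ne' ?_)
    simpa using congrArg im h

/-- the Wronskian `[s(z),u(z)]_k = a_k (s_k u_{k+1} - s_{k+1} u_k)` equals
`e^z z^{-2iρ} Γ(1+2iρ)` for all `k` (hence is independent of `k`), and is nonzero. -/
theorem laguerre_wronskian_s_u (ρ ε : ℝ) (hρ : 0 < ρ) (hε : ε ∈ Set.Ico (0 : ℝ) 1)
    (z : ℂ) (hz : ¬(z.im = 0 ∧ z.re ≤ 0)) :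
    (∀ k : ℤ,
      (coefA ρ ε k : ℂ) * (sSol ρ ε k z * uSol ρ ε (k + 1) z - sSol ρ ε (k + 1) z * uSol ρ ε k z)
        = Complex.exp z * z ^ (-2 * I * (ρ : ℂ)) * Complex.Gamma (1 + 2 * I * ρ)) ∧
    Complex.exp z * z ^ (-2 * I * (ρ : ℂ)) * Complex.Gamma (1 + 2 * I * ρ) ≠ 0 :=
  laguerre_wronskian_s_u_general ρ ε hρ z hz
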